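/- (Lemma 1, part 2.) Under the MIS/RMIS tableau setup, assume the first row of A^I is identically zero. Then (b^f)^⊺ A^{f,f} = (b^O)^⊺ A^{s,f} as row vectors in ℝ^{s^O s^I}. -/

import Mathlib

open Matrix BigOperators Finset

/-- The increments `d_j = c^O_{j+1} - c^O_j` (with `d_{s^O} = 1 - c^O_{s^O}`). -/
noncomputable def misD (sO : ℕ) (cO : Fin sO → ℝ) (j : Fin sO) : ℝ :=
  if h : j.val + 1 < sO then cO ⟨j.val + 1, h⟩ - cO j else 1 - cO j

/-- The fast-fast GARK coefficient matrix `A^{f,f}` of the MIS/RMIS tableau. -/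
noncomputable def misAff (sI sO : ℕ) (AI : Matrix (Fin sI) (Fin sI) ℝ)
    (bI : Fin sI → ℝ) (cO : Fin sO → ℝ) :
    Matrix (Fin sO × Fin sI) (Fin sO × Fin sI) ℝ :=
  fun ip jq =>
    if jq.1 < ip.1 then misD sO cO jq.1 * bI jq.2
    else if jq.1 = ip.1 then misD sO cO ip.1 * AI ip.2 jq.2
    else 0

/-- The slow-fast GARK coefficient matrix `A^{s,f}` of the MIS/RMIS tableau. -/
noncomputable def misAsf (sI sO : ℕ) (bI : Fin sI → ℝ) (cO : Fin sO → ℝ) :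
    Matrix (Fin sO) (Fin sO × Fin sI) ℝ :=
  fun i jq => if jq.1 < i then misD sO cO jq.1 * bI jq.2 else 0

/-- The fast-slow GARK coefficient matrix `A^{f,s}` of the MIS/RMIS tableau. -/
noncomputable def misAfs (sI sO : ℕ) (cI : Fin sI → ℝ)
    (AO : Matrix (Fin sO) (Fin sO) ℝ) (bO : Fin sO → ℝ) :
    Matrix (Fin sO × Fin sI) (Fin sO) ℝ :=
  fun ip j =>
    if ip.1.val = 0 then
      (if h : 1 < sO then cI ip.2 * AO ⟨1, h⟩ j else 0)
    else if h : ip.1.val + 1 < sO then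
      AO ip.1 j + cI ip.2 * (AO ⟨ip.1.val + 1, h⟩ j - AO ip.1 j)
    else
      AO ip.1 j + cI ip.2 * (bO j - AO ip.1 j)

/-- The fast abscissae `c^f` of the MIS/RMIS tableau. -/
noncomputable def misCf (sI sO : ℕ) (cI : Fin sI → ℝ) (cO : Fin sO → ℝ) :
    Fin sO × Fin sI → ℝ :=
  fun ip => cO ip.1 + misD sO cO ip.1 * cI ip.2

/-- The RMIS fast weights `b^f` (i-th block is `b^O_i e_1`). -/
noncomputable def misBf (sI sO : ℕ) (bO : Fin sO → ℝ) : Fin sO × Fin sI → ℝ :=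
  fun ip => if ip.2.val = 0 then bO ip.1 else 0

/-- The vector `v^O` appearing in the fourth-order RMIS condition. -/
noncomputable def misV (sO : ℕ) (bO cO : Fin sO → ℝ) (i : Fin sO) : ℝ :=
  if i.val = 0 then 0
  else if h : i.val + 1 < sO then
    bO i * (cO i - cO ⟨i.val - 1, by have := i.isLt; omega⟩) +
      (cO ⟨i.val + 1, h⟩ - cO ⟨i.val - 1, by have := i.isLt; omega⟩) *
        ∑ j ∈ Finset.univ.filter (fun j => i < j), bO j
  else bO i * (cO i - cO ⟨i.val - 1, by have := i.isLt; omega⟩)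

/- The weights `b^f` only see the first stage of each inner block, and since the first row of
`A^I` vanishes, the first-stage rows of `A^{f,f}` are exactly the rows of `A^{s,f}`. -/

lemma misBf_vecMul {n : Type*} (sI sO : ℕ) (hsI : 0 < sI) (bO : Fin sO → ℝ)
    (M : Matrix (Fin sO × Fin sI) n ℝ) :
    misBf sI sO bO ᵥ* M = bO ᵥ* M.submatrix (fun i => (i, ⟨0, hsI⟩)) id := by
  ext j
  simp only [vecMul, dotProduct, misBf, submatrix_apply, id, Fintype.sum_prod_type]
  refine sum_congr rfl fun i _ => ?_
  rw [sum_eq_single ⟨0, hsI⟩ (fun p _ hp => by simp [Fin.ext_iff.not.mp hp]) (by simp)]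
  simp

lemma misAff_submatrix_first_stage (sI sO : ℕ) (hsI : 0 < sI) (AI : Matrix (Fin sI) (Fin sI) ℝ)
    (bI : Fin sI → ℝ) (cO : Fin sO → ℝ) (hAI1 : ∀ q, AI ⟨0, hsI⟩ q = 0) :
    (misAff sI sO AI bI cO).submatrix (fun i => (i, ⟨0, hsI⟩)) id = misAsf sI sO bI cO := by
  ext i jq
  by_cases hlt : jq.1 < i
  · simp [misAff, misAsf, hlt]
  · simp [misAff, misAsf, hlt, hAI1]

/-- Lemma 1, part 2: If the first row of `A^I` is zero, then
`(b^f)ᵀ A^{f,f} = (b^O)ᵀ A^{s,f}`. -/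
theorem bf_Aff_eq_bO_Asf (sI sO : ℕ) (hsI : 1 ≤ sI)
    (AI : Matrix (Fin sI) (Fin sI) ℝ) (bI : Fin sI → ℝ)
    (bO cO : Fin sO → ℝ)
    (hAI1 : ∀ q, AI ⟨0, by omega⟩ q = 0) :
    misBf sI sO bO ᵥ* misAff sI sO AI bI cO = bO ᵥ* misAsf sI sO bI cO := by
  rw [misBf_vecMul sI sO hsI, misAff_submatrix_first_stage sI sO hsI AI bI cO hAI1]
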